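/- Assume the expectation Gram matrix is positive semidefinite at grade n. Then for every real inner product space and every family of vectors (V_w), |⟨(id−E)∘id, (id−E)∘S⟩| ≤ ‖(id−E)∘id‖², where the inner product is taken over the words of length n; in particular the quantity ‖(id−E)∘id‖² + ⟨(id−E)∘id, (id−E)∘S⟩ is nonnegative. -/

import Mathlib

open Finsupp

/-- Words over the alphabet `A = {0,1,…,d}`. -/
abbrev Word (d : ℕ) : Type := List (Fin (d+1))

/-- The free real vector space with basis the set of all words. -/
abbrev KA (d : ℕ) : Type := Word d →₀ ℝ

/-- Shuffle product of two words, as an element of `KA d`. -/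
noncomputable def shuffleWord (d : ℕ) : Word d → Word d → KA d
  | [], v => Finsupp.single v 1
  | a :: u, [] => Finsupp.single (a :: u) 1
  | a :: u, b :: v =>
      Finsupp.mapDomain (List.cons a) (shuffleWord d u (b :: v)) +
      Finsupp.mapDomain (List.cons b) (shuffleWord d (a :: u) v)
  termination_by u v => u.length + v.length

/-- Bilinear extension of the shuffle product to `KA d`. -/
noncomputable def sh (d : ℕ) (x y : KA d) : KA d :=
  x.sum fun u cu => y.sum fun v cv => (cu * cv) • shuffleWord d u v

/-- Admissible words: concatenations of blocks each of which is the single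
letter `0` or a pair `aa` with `a ≠ 0`. -/
inductive Admissible (d : ℕ) : Word d → Prop
  | nil : Admissible d []
  | zero {w : Word d} : Admissible d w → Admissible d (0 :: w)
  | pair {w : Word d} (a : Fin (d+1)) : a ≠ 0 → Admissible d w →
      Admissible d (a :: a :: w)

/-- Number of `0` letters. -/
def zc (d : ℕ) (w : Word d) : ℕ := w.count 0

/-- Half the number of nonzero letters. -/
def dc (d : ℕ) (w : Word d) : ℕ := (w.length - w.count 0) / 2

def nc (d : ℕ) (w : Word d) : ℕ := zc d w + dc d w

open Classical in
/-- The expectation map on words. -/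
noncomputable def Ebar (d : ℕ) (t : ℝ) (w : Word d) : ℝ :=
  if Admissible d w then t ^ nc d w / (2 ^ dc d w * Nat.factorial (nc d w)) else 0

/-- Linear extension of the expectation map to `KA d`. -/
noncomputable def EbarL (d : ℕ) (t : ℝ) (x : KA d) : ℝ :=
  x.sum fun w c => c * Ebar d t w

/-- The linear endomorphism of `KA d` determined by values on basis words. -/
noncomputable def wordLift (d : ℕ) (f : Word d → KA d) : KA d →ₗ[ℝ] KA d :=
  Finsupp.lsum ℝ fun w => LinearMap.toSpanSingleton ℝ (KA d) (f w)

/-- The identity endomorphism `id`. -/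
noncomputable def idE (d : ℕ) : KA d →ₗ[ℝ] KA d := LinearMap.id

/-- The reversal endomorphism `|S|`. -/
noncomputable def revE (d : ℕ) : KA d →ₗ[ℝ] KA d :=
  wordLift d fun w => Finsupp.single w.reverse 1

/-- The antipode `S`. -/
noncomputable def Sa (d : ℕ) : KA d →ₗ[ℝ] KA d :=
  wordLift d fun w => Finsupp.single w.reverse ((-1 : ℝ) ^ w.length)

/-- The convolution unit `ν`. -/
noncomputable def nuE (d : ℕ) : KA d →ₗ[ℝ] KA d :=
  wordLift d fun w => if w = [] then Finsupp.single ([] : Word d) 1 else 0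

/-- The expectation endomorphism `E`. -/
noncomputable def EE (d : ℕ) (t : ℝ) : KA d →ₗ[ℝ] KA d :=
  wordLift d fun w => Finsupp.single ([] : Word d) (Ebar d t w)

/-- The convolution product `X ⋆ Y`. -/
noncomputable def conv (d : ℕ) (X Y : KA d →ₗ[ℝ] KA d) : KA d →ₗ[ℝ] KA d :=
  wordLift d fun w => ∑ k ∈ Finset.range (w.length + 1),
    sh d (X (Finsupp.single (w.take k) 1)) (Y (Finsupp.single (w.drop k) 1))

/-- Convolution powers, `X^{⋆0} = ν`. -/
noncomputable def convPow (d : ℕ) (X : KA d →ₗ[ℝ] KA d) : ℕ → (KA d →ₗ[ℝ] KA d)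
  | 0 => nuE d
  | k + 1 => conv d X (convPow d X k)

/-- The inner product `⟨X,Y⟩` of endomorphisms, taken over the words of
length `n`, relative to the family of vectors `Vf`. -/
noncomputable def ip (d : ℕ) (t : ℝ) {H : Type*} [NormedAddCommGroup H]
    [InnerProductSpace ℝ H] (Vf : Word d → H) (n : ℕ)
    (X Y : KA d →ₗ[ℝ] KA d) : ℝ :=
  ∑ u : Fin n → Fin (d+1), ∑ v : Fin n → Fin (d+1),
    EbarL d t (sh d (X (Finsupp.single (List.ofFn u) 1))
                    (Y (Finsupp.single (List.ofFn v) 1))) *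
      (inner ℝ (Vf (List.ofFn u)) (Vf (List.ofFn v)) : ℝ)

/-- Positive semidefiniteness of the expectation Gram matrix at grade `n`:
indexed by the words of length `n` together with the empty word. -/
def gramPSD (d n : ℕ) (t : ℝ) : Prop :=
  ∀ c : Option (Fin n → Fin (d+1)) → ℝ,
    0 ≤ ∑ x : Option (Fin n → Fin (d+1)), ∑ y : Option (Fin n → Fin (d+1)),
      c x * c y *
        EbarL d t (shuffleWord d (x.elim ([] : Word d) List.ofFn)
                                 (y.elim ([] : Word d) List.ofFn))

/-!
Write `X = (id - E) ∘ id`, `Y = (id - E) ∘ S` and `C(u, v) = Ē(u ⧢ v) - Ē(u) Ē(v)`. Then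
`Ē(X u ⧢ X v) = C(u, v)` and `Ē(X u ⧢ Y v) = (-1)ⁿ C(u, reverse v)`. Testing the grade-`n`
Gram matrix on coefficient families whose coefficient of `𝟏` is `-∑ c_u Ē(u)` shows that `C`
is positive semidefinite on words of length `n`, so `(f, g) ↦ ∑ C(u, v) ⟪f u, g v⟫` is a
semi-inner product. Reversal commutes with shuffles and preserves `Ē`, so `C` is invariant
under reversing both words; hence reversal is an isometry of this semi-inner product, and
Cauchy–Schwarz gives `|⟨X, Y⟩| ≤ ‖X‖²`.
-/

section GramPairing

variable {ι H : Type*} [Fintype ι] [NormedAddCommGroup H] [InnerProductSpace ℝ H]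

def gramPairing (M : Matrix ι ι ℝ) (f g : ι → H) : ℝ :=
  ∑ u, ∑ v, M u v * inner ℝ (f u) (g v)

theorem Matrix.PosSemidef.exists_gramPairing_eq_inner {M : Matrix ι ι ℝ} (hM : M.PosSemidef) :
    ∃ (m : ℕ) (T : (ι → H) → PiLp 2 (fun _ : Fin m => H)),
      ∀ f g, gramPairing M f g = inner ℝ (T f) (T g) := by
  obtain ⟨m, w, rfl⟩ := Matrix.posSemidef_iff_eq_sum_vecMulVec.mp hM
  refine ⟨m, fun f => WithLp.toLp 2 fun i => ∑ u, w i u • f u, fun f g => ?_⟩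
  simp only [gramPairing, PiLp.inner_apply, sum_inner, inner_sum, real_inner_smul_left,
    real_inner_smul_right, Matrix.sum_apply, Matrix.vecMulVec_apply, star_trivial,
    Finset.sum_mul]
  rw [Finset.sum_comm]
  conv_rhs => rw [Finset.sum_comm]
  refine Finset.sum_congr rfl fun v _ => ?_
  rw [Finset.sum_comm]
  exact Finset.sum_congr rfl fun i _ => Finset.sum_congr rfl fun u _ => by ring

theorem gramPairing_comp_perm {M : Matrix ι ι ℝ} {σ : Equiv.Perm ι}
    (hσ : ∀ u v, M (σ u) (σ v) = M u v) (f g : ι → H) :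
    gramPairing M (f ∘ σ) (g ∘ σ) = gramPairing M f g := by
  unfold gramPairing
  conv_lhs => enter [2, u, 2, v]; rw [Function.comp_apply, Function.comp_apply, ← hσ]
  rw [Equiv.sum_comp σ fun u => ∑ v, M u (σ v) * inner ℝ (f u) (g (σ v))]
  exact Finset.sum_congr rfl fun u _ => Equiv.sum_comp σ fun v => M u v * inner ℝ (f u) (g v)

theorem Matrix.PosSemidef.abs_gramPairing_comp_perm_le {M : Matrix ι ι ℝ} (hM : M.PosSemidef)
    {σ : Equiv.Perm ι} (hσ : ∀ u v, M (σ u) (σ v) = M u v) (f : ι → H) :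
    |gramPairing M f (f ∘ σ)| ≤ gramPairing M f f := by
  obtain ⟨m, T, hT⟩ := hM.exists_gramPairing_eq_inner (H := H)
  have hnorm : ‖T (f ∘ σ)‖ = ‖T f‖ := by
    rw [norm_eq_sqrt_real_inner, norm_eq_sqrt_real_inner, ← hT, ← hT, gramPairing_comp_perm hσ]
  calc |gramPairing M f (f ∘ σ)| = |inner ℝ (T f) (T (f ∘ σ))| := by rw [hT]
    _ ≤ ‖T f‖ * ‖T (f ∘ σ)‖ := abs_real_inner_le_norm _ _
    _ = gramPairing M f f := by rw [hnorm, hT, real_inner_self_eq_norm_mul_norm]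

end GramPairing

section Shuffle

variable {d : ℕ}

theorem shuffleWord_nil_left (v : Word d) : shuffleWord d [] v = single v 1 := by
  rw [shuffleWord]

theorem shuffleWord_nil_right (u : Word d) : shuffleWord d u [] = single u 1 := by
  cases u <;> rw [shuffleWord]

theorem shuffleWord_cons_cons (a b : Fin (d + 1)) (u v : Word d) :
    shuffleWord d (a :: u) (b :: v) =
      mapDomain (List.cons a) (shuffleWord d u (b :: v)) +
      mapDomain (List.cons b) (shuffleWord d (a :: u) v) := by
  rw [shuffleWord]

theorem shuffleWord_comm (u v : Word d) : shuffleWord d u v = shuffleWord d v u := by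
  induction u generalizing v with
  | nil => rw [shuffleWord_nil_left, shuffleWord_nil_right]
  | cons a u ihu =>
    induction v with
    | nil => rw [shuffleWord_nil_left, shuffleWord_nil_right]
    | cons b v ihv => rw [shuffleWord_cons_cons, shuffleWord_cons_cons, ihu, ihv, add_comm]

theorem mapDomain_append_singleton_cons {M : Type*} [AddCommMonoid M] (a c : Fin (d + 1))
    (x : Word d →₀ M) :
    mapDomain (· ++ [a]) (mapDomain (List.cons c) x) =
      mapDomain (List.cons c) (mapDomain (· ++ [a]) x) := by
  rw [← mapDomain_comp, ← mapDomain_comp]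
  rfl

theorem shuffleWord_append_singleton :
    ∀ (u v : Word d) (a b : Fin (d + 1)),
      shuffleWord d (u ++ [a]) (v ++ [b]) =
        mapDomain (· ++ [a]) (shuffleWord d u (v ++ [b])) +
        mapDomain (· ++ [b]) (shuffleWord d (u ++ [a]) v)
  | [], [], a, b => by
    simp only [List.nil_append, shuffleWord_cons_cons, shuffleWord_nil_left,
      shuffleWord_nil_right, mapDomain_single, List.cons_append, List.nil_append]
    exact add_comm _ _
  | c :: u, [], a, b => by
    have ih := shuffleWord_append_singleton u [] a b
    simp only [List.nil_append, List.cons_append, shuffleWord_nil_right,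
      shuffleWord_cons_cons] at ih ⊢
    rw [ih]
    simp only [mapDomain_add, mapDomain_single, mapDomain_append_singleton_cons, List.cons_append]
    abel
  | [], e :: v, a, b => by
    have ih := shuffleWord_append_singleton [] v a b
    simp only [List.nil_append, List.cons_append, shuffleWord_nil_left,
      shuffleWord_cons_cons] at ih ⊢
    rw [ih]
    simp only [mapDomain_add, mapDomain_single, mapDomain_append_singleton_cons, List.cons_append]
    abel
  | c :: u, e :: v, a, b => by
    have ih₁ := shuffleWord_append_singleton u (e :: v) a b
    have ih₂ := shuffleWord_append_singleton (c :: u) v a b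
    simp only [List.cons_append, shuffleWord_cons_cons] at ih₁ ih₂ ⊢
    rw [ih₁, ih₂]
    simp only [mapDomain_add, mapDomain_append_singleton_cons]
    abel
termination_by u v => u.length + v.length

theorem mapDomain_reverse_shuffleWord :
    ∀ u v : Word d, mapDomain List.reverse (shuffleWord d u v) =
      shuffleWord d u.reverse v.reverse
  | [], v => by simp [shuffleWord_nil_left]
  | a :: u, [] => by simp [shuffleWord_nil_right]
  | a :: u, b :: v => by
    have reverse_cons (c : Fin (d + 1)) :
        (List.reverse ∘ List.cons c : Word d → Word d) = (· ++ [c]) ∘ List.reverse := by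
      funext w; simp
    rw [shuffleWord_cons_cons, mapDomain_add, ← mapDomain_comp, ← mapDomain_comp,
      reverse_cons, reverse_cons, mapDomain_comp, mapDomain_comp,
      mapDomain_reverse_shuffleWord u (b :: v), mapDomain_reverse_shuffleWord (a :: u) v,
      List.reverse_cons, List.reverse_cons, shuffleWord_append_singleton]
termination_by u v => u.length + v.length

end Shuffle

section Expectation

variable {d : ℕ}

theorem Admissible.append {u v : Word d} (hu : Admissible d u) (hv : Admissible d v) :
    Admissible d (u ++ v) := by
  induction hu with
  | nil => exact hv
  | zero _ ih => exact ih.zero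
  | pair a ha _ ih => exact ih.pair a ha

theorem Admissible.reverse {w : Word d} (hw : Admissible d w) : Admissible d w.reverse := by
  induction hw with
  | nil => exact .nil
  | zero _ ih => simpa using ih.append (.zero .nil)
  | pair a ha _ ih => simpa using ih.append (.pair a ha .nil)

theorem admissible_reverse_iff {w : Word d} : Admissible d w.reverse ↔ Admissible d w :=
  ⟨fun h => by simpa using h.reverse, Admissible.reverse⟩

theorem Ebar_reverse (t : ℝ) (w : Word d) : Ebar d t w.reverse = Ebar d t w := by
  simp only [Ebar, nc, zc, dc, List.count_reverse, List.length_reverse]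
  congr 1
  exact propext admissible_reverse_iff

theorem Ebar_nil (t : ℝ) : Ebar d t [] = 1 := by
  simp [Ebar, Admissible.nil, nc, zc, dc]

theorem EbarL_eq_linearCombination (t : ℝ) (x : KA d) :
    EbarL d t x = linearCombination ℝ (Ebar d t) x := by
  simp [EbarL, linearCombination_apply]

end Expectation

section Covariance

variable {d : ℕ}

theorem EbarL_single (t : ℝ) (w : Word d) (c : ℝ) :
    EbarL d t (single w c) = c * Ebar d t w := by
  rw [EbarL_eq_linearCombination, linearCombination_single, smul_eq_mul]

theorem EbarL_mapDomain_reverse (t : ℝ) (x : KA d) :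
    EbarL d t (mapDomain List.reverse x) = EbarL d t x := by
  rw [EbarL_eq_linearCombination, EbarL_eq_linearCombination, linearCombination_mapDomain]
  congr 2
  exact funext (Ebar_reverse t)

theorem sh_single_single (u v : Word d) (a b : ℝ) :
    sh d (single u a) (single v b) = (a * b) • shuffleWord d u v := by
  simp [sh]

theorem sh_add_left (x y z : KA d) : sh d (x + y) z = sh d x z + sh d y z := by
  refine sum_add_index' (fun u => by simp) fun u a b => ?_
  rw [← sum_add]
  exact sum_congr fun v _ => by rw [add_mul, add_smul]

theorem sh_add_right (x y z : KA d) : sh d x (y + z) = sh d x y + sh d x z := by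
  rw [sh, sh, sh, ← sum_add]
  exact sum_congr fun u _ =>
    sum_add_index' (fun v => by simp) fun v a b => by rw [mul_add, add_smul]

theorem wordLift_single (f : Word d → KA d) (w : Word d) (c : ℝ) :
    wordLift d f (single w c) = c • f w := by
  simp [wordLift]

theorem idE_apply (x : KA d) : idE d x = x := rfl

theorem idE_sub_EE_single (t : ℝ) (w : Word d) (c : ℝ) :
    (idE d - EE d t) (single w c) = single w c + single [] (-(c * Ebar d t w)) := by
  rw [LinearMap.sub_apply, EE, wordLift_single, smul_single, smul_eq_mul, single_neg,
    ← sub_eq_add_neg]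
  rfl

theorem Sa_single (w : Word d) : Sa d (single w 1) = single w.reverse ((-1) ^ w.length) := by
  rw [Sa, wordLift_single, one_smul]

noncomputable def shuffleCov (d : ℕ) (t : ℝ) (u v : Word d) : ℝ :=
  EbarL d t (shuffleWord d u v) - Ebar d t u * Ebar d t v

theorem shuffleCov_comm (t : ℝ) (u v : Word d) : shuffleCov d t u v = shuffleCov d t v u := by
  rw [shuffleCov, shuffleCov, shuffleWord_comm, mul_comm]

theorem shuffleCov_reverse (t : ℝ) (u v : Word d) :
    shuffleCov d t u.reverse v.reverse = shuffleCov d t u v := by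
  rw [shuffleCov, shuffleCov, ← mapDomain_reverse_shuffleWord, EbarL_mapDomain_reverse,
    Ebar_reverse, Ebar_reverse]

theorem EbarL_sh_idE_sub_EE_single (t : ℝ) (u v : Word d) (a b : ℝ) :
    EbarL d t (sh d ((idE d - EE d t) (single u a)) ((idE d - EE d t) (single v b))) =
      a * b * shuffleCov d t u v := by
  simp only [idE_sub_EE_single, sh_add_left, sh_add_right, sh_single_single, map_add, map_smul,
    EbarL_eq_linearCombination, shuffleWord_nil_left, shuffleWord_nil_right, shuffleCov,
    linearCombination_single, smul_eq_mul, Ebar_nil]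
  ring

end Covariance

section Grade

variable {d n : ℕ}

def reverseTuple (n : ℕ) (α : Type*) : Equiv.Perm (Fin n → α) :=
  Fin.revPerm.arrowCongr (Equiv.refl α)

theorem ofFn_reverseTuple {α : Type*} (u : Fin n → α) :
    List.ofFn (reverseTuple n α u) = (List.ofFn u).reverse := by
  refine List.ext_getElem (by simp) fun i h _ => ?_
  simp only [reverseTuple, List.getElem_ofFn, List.getElem_reverse, Equiv.arrowCongr_apply,
    Fin.rev, List.length_ofFn, Fin.revPerm_symm, Fin.revPerm_apply, Equiv.coe_refl,
    Function.comp_apply, id_eq]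
  congr 2
  omega

theorem reverse_ofFn_reverseTuple {α : Type*} (u : Fin n → α) :
    (List.ofFn (reverseTuple n α u)).reverse = List.ofFn u := by
  rw [ofFn_reverseTuple, List.reverse_reverse]

noncomputable def covMatrix (d n : ℕ) (t : ℝ) :
    Matrix (Fin n → Fin (d + 1)) (Fin n → Fin (d + 1)) ℝ :=
  Matrix.of fun u v => shuffleCov d t (List.ofFn u) (List.ofFn v)

theorem covMatrix_reverseTuple (t : ℝ) (u v : Fin n → Fin (d + 1)) :
    covMatrix d n t (reverseTuple n _ u) (reverseTuple n _ v) = covMatrix d n t u v := by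
  simp only [covMatrix, Matrix.of_apply, ofFn_reverseTuple, shuffleCov_reverse]

theorem covMatrix_posSemidef {t : ℝ} (hPSD : gramPSD d n t) : (covMatrix d n t).PosSemidef := by
  refine .of_dotProduct_mulVec_nonneg (Matrix.IsHermitian.ext fun u v => ?_) fun x => ?_
  · simp [covMatrix, shuffleCov_comm]
  set T := ∑ u, x u * Ebar d t (List.ofFn u)
  have h := hPSD (Option.elim · (-T) x)
  simp only [Fintype.sum_option, Option.elim, shuffleWord_nil_left, shuffleWord_nil_right,
    EbarL_single, Ebar_nil] at h
  have hT (c : ℝ) : ∑ u, c * x u * (1 * Ebar d t (List.ofFn u)) = c * T := by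
    rw [Finset.mul_sum]
    exact Finset.sum_congr rfl fun u _ => by ring
  have hT' (c : ℝ) : ∑ u, x u * c * (1 * Ebar d t (List.ofFn u)) = c * T := by
    rw [← hT]
    exact Finset.sum_congr rfl fun u _ => by ring
  rw [Finset.sum_add_distrib, hT, hT'] at h
  have hq : star x ⬝ᵥ (covMatrix d n t).mulVec x =
      ∑ u, ∑ v, x u * x v * EbarL d t (shuffleWord d (List.ofFn u) (List.ofFn v)) - T * T := by
    simp only [dotProduct, Matrix.mulVec, covMatrix, shuffleCov, Matrix.of_apply, star_trivial, T]
    rw [Finset.sum_mul_sum, ← Finset.sum_sub_distrib]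
    refine Finset.sum_congr rfl fun u _ => ?_
    rw [Finset.mul_sum, ← Finset.sum_sub_distrib]
    exact Finset.sum_congr rfl fun v _ => by ring
  linarith

end Grade

section InnerProduct

variable {d n : ℕ} {H : Type*} [NormedAddCommGroup H] [InnerProductSpace ℝ H]

theorem ip_idE_sub_EE_self (t : ℝ) (Vf : Word d → H) :
    ip d t Vf n ((idE d - EE d t) ∘ₗ idE d) ((idE d - EE d t) ∘ₗ idE d) =
      gramPairing (covMatrix d n t) (Vf ∘ List.ofFn) (Vf ∘ List.ofFn) := by
  refine Finset.sum_congr rfl fun u _ => Finset.sum_congr rfl fun v _ => ?_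
  rw [LinearMap.comp_apply, LinearMap.comp_apply, idE_apply, idE_apply,
    EbarL_sh_idE_sub_EE_single, one_mul, one_mul]
  rfl

theorem ip_idE_sub_EE_Sa (t : ℝ) (Vf : Word d → H) :
    ip d t Vf n ((idE d - EE d t) ∘ₗ idE d) ((idE d - EE d t) ∘ₗ Sa d) =
      (-1) ^ n * gramPairing (covMatrix d n t) (Vf ∘ List.ofFn)
        (Vf ∘ List.ofFn ∘ reverseTuple n (Fin (d + 1))) := by
  rw [gramPairing, Finset.mul_sum]
  refine Finset.sum_congr rfl fun u _ => ?_
  rw [Finset.mul_sum, ← Equiv.sum_comp (reverseTuple n (Fin (d + 1)))]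
  refine Finset.sum_congr rfl fun v _ => ?_
  rw [LinearMap.comp_apply, LinearMap.comp_apply, idE_apply, Sa_single, reverse_ofFn_reverseTuple,
    List.length_ofFn, EbarL_sh_idE_sub_EE_single, one_mul, mul_assoc]
  rfl

end InnerProduct

theorem stmt_2_general (d n : ℕ) (t : ℝ)
    (hPSD : gramPSD d n t)
    {H : Type*} [NormedAddCommGroup H] [InnerProductSpace ℝ H]
    (Vf : Word d → H) :
    |ip d t Vf n ((idE d - EE d t) ∘ₗ idE d) ((idE d - EE d t) ∘ₗ Sa d)|
      ≤ ip d t Vf n ((idE d - EE d t) ∘ₗ idE d) ((idE d - EE d t) ∘ₗ idE d) ∧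
    0 ≤ ip d t Vf n ((idE d - EE d t) ∘ₗ idE d) ((idE d - EE d t) ∘ₗ idE d)
        + ip d t Vf n ((idE d - EE d t) ∘ₗ idE d) ((idE d - EE d t) ∘ₗ Sa d) := by
  suffices h : |ip d t Vf n ((idE d - EE d t) ∘ₗ idE d) ((idE d - EE d t) ∘ₗ Sa d)|
      ≤ ip d t Vf n ((idE d - EE d t) ∘ₗ idE d) ((idE d - EE d t) ∘ₗ idE d) from
    ⟨h, by linarith [neg_le_of_abs_le h]⟩
  rw [ip_idE_sub_EE_self, ip_idE_sub_EE_Sa, abs_mul, abs_neg_one_pow, one_mul]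
  exact (covMatrix_posSemidef hPSD).abs_gramPairing_comp_perm_le
    (covMatrix_reverseTuple t) (Vf ∘ List.ofFn)

theorem stmt_2 (d n : ℕ) (hd : 1 ≤ d) (hn : 1 ≤ n) (t : ℝ) (ht : 0 < t)
    (hPSD : gramPSD d n t)
    {H : Type*} [NormedAddCommGroup H] [InnerProductSpace ℝ H]
    (Vf : Word d → H) :
    |ip d t Vf n ((idE d - EE d t) ∘ₗ idE d) ((idE d - EE d t) ∘ₗ Sa d)|
      ≤ ip d t Vf n ((idE d - EE d t) ∘ₗ idE d) ((idE d - EE d t) ∘ₗ idE d) ∧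
    0 ≤ ip d t Vf n ((idE d - EE d t) ∘ₗ idE d) ((idE d - EE d t) ∘ₗ idE d)
        + ip d t Vf n ((idE d - EE d t) ∘ₗ idE d) ((idE d - EE d t) ∘ₗ Sa d) :=
  stmt_2_general d n t hPSD Vf
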